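/- Dual Pythagorean theorem for transductive Boltzmann machine families: let r be a strictly positive probability distribution on the sample space S, and let θ_p, θ_q : B → ℝ define Gibbs distributions p = p(·;θ_p) and q = p(·;θ_q). If q matches r in all expectation parameters over B, i.e. Σ_{x ∈ S} ζ(s,x) q(x) = Σ_{x ∈ S} ζ(s,x) r(x) for all s ∈ B, then D_KL(r, p) = D_KL(r, q) + D_KL(q, p), where D_KL(u, v) = Σ_{x ∈ S} u(x) log(u(x)/v(x)). -/
import Mathlib


open Finset

/-- ζ(s,x) = 1 if s ⊆ x and 0 otherwise. -/
noncomputable def zeta {V : Type*} [DecidableEq V] (s x : Finset V) : ℝ :=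
  if s ⊆ x then 1 else 0

/-- The log-partition function ψ(θ) = log Σ_{x ∈ S} exp(Σ_{s ∈ B} ζ(s,x) θ(s)). -/
noncomputable def psi {V : Type*} [DecidableEq V] (S B : Finset (Finset V))
    (θ : Finset V → ℝ) : ℝ :=
  Real.log (∑ x ∈ S, Real.exp (∑ s ∈ B, zeta s x * θ s))

/-- The Gibbs probability p(x;θ) = exp(Σ_{s ∈ B} ζ(s,x) θ(s) − ψ(θ)). -/
noncomputable def gibbs {V : Type*} [DecidableEq V] (S B : Finset (Finset V))
    (θ : Finset V → ℝ) (x : Finset V) : ℝ :=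
  Real.exp (∑ s ∈ B, zeta s x * θ s - psi S B θ)

/-- The expectation parameter η(y;θ) = Σ_{x ∈ S} ζ(y,x) p(x;θ). -/
noncomputable def eta {V : Type*} [DecidableEq V] (S B : Finset (Finset V))
    (θ : Finset V → ℝ) (y : Finset V) : ℝ :=
  ∑ x ∈ S, zeta y x * gibbs S B θ x
/-- The Kullback–Leibler divergence between two distributions on S. -/
noncomputable def klDiv {V : Type*} [DecidableEq V] (S : Finset (Finset V))
    (u v : Finset V → ℝ) : ℝ :=
  ∑ x ∈ S, u x * Real.log (u x / v x)

/-- Dual Pythagorean theorem for TBM families: if the Gibbs distribution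
q = p(·;θq) matches r in all expectation parameters over B, then
Sum of Gibbs probabilities over S is 1. -/
lemma sum_gibbs {V : Type*} [DecidableEq V] (S B : Finset (Finset V)) (hS : S.Nonempty)
    (θ : Finset V → ℝ) : ∑ x ∈ S, gibbs S B θ x = 1 := by
  have hpos : 0 < ∑ x ∈ S, Real.exp (∑ s ∈ B, zeta s x * θ s) :=
    Finset.sum_pos (fun x _ => Real.exp_pos _) hS
  simp only [gibbs, Real.exp_sub, psi, Real.exp_log hpos]
  rw [← Finset.sum_div, div_self (ne_of_gt hpos)]

/-- Dual Pythagorean theorem for TBM families: if the Gibbs distribution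
q = p(·;θq) matches r in all expectation parameters over B, then
D_KL(r, p) = D_KL(r, q) + D_KL(q, p) for any Gibbs distribution p = p(·;θp). -/
theorem kl_pythagorean_dual {V : Type*} [Fintype V] [DecidableEq V]
    (S B : Finset (Finset V)) (hS : S.Nonempty)
    (r : Finset V → ℝ) (hpos : ∀ x ∈ S, 0 < r x)
    (hsum : ∑ x ∈ S, r x = 1)
    (θp θq : Finset V → ℝ)
    (hmatch : ∀ s ∈ B,
      ∑ x ∈ S, zeta s x * gibbs S B θq x = ∑ x ∈ S, zeta s x * r x) :
    klDiv S r (gibbs S B θp)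
      = klDiv S r (gibbs S B θq) + klDiv S (gibbs S B θq) (gibbs S B θp) := by
  set p := gibbs S B θp with hpdef
  set q := gibbs S B θq with hqdef
  have hp : ∀ x, 0 < p x := fun x => Real.exp_pos _
  have hq : ∀ x, 0 < q x := fun x => Real.exp_pos _
  set f : Finset V → ℝ := fun x =>
    ∑ s ∈ B, zeta s x * (θq s - θp s) - (psi S B θq - psi S B θp) with hf
  have hlogq : ∀ x, Real.log (q x) = ∑ s ∈ B, zeta s x * θq s - psi S B θq :=
    fun x => Real.log_exp _
  have hlogp : ∀ x, Real.log (p x) = ∑ s ∈ B, zeta s x * θp s - psi S B θp :=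
    fun x => Real.log_exp _
  have hfeq : ∀ x, f x = Real.log (q x) - Real.log (p x) := by
    intro x
    rw [hlogq, hlogp, hf]
    simp only [mul_sub, Finset.sum_sub_distrib]
    ring
  have h1 : klDiv S r p = klDiv S r q + ∑ x ∈ S, r x * f x := by
    rw [klDiv, klDiv, ← Finset.sum_add_distrib]
    refine Finset.sum_congr rfl fun x hx => ?_
    rw [Real.log_div (ne_of_gt (hpos x hx)) (ne_of_gt (hp x)),
        Real.log_div (ne_of_gt (hpos x hx)) (ne_of_gt (hq x)), hfeq x]
    ring
  have h2 : klDiv S q p = ∑ x ∈ S, q x * f x := by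
    rw [klDiv]
    refine Finset.sum_congr rfl fun x _ => ?_
    rw [Real.log_div (ne_of_gt (hq x)) (ne_of_gt (hp x)), hfeq x]
  have hq1 : ∑ x ∈ S, q x = 1 := sum_gibbs S B hS θq
  have hsw : ∀ w : Finset V → ℝ, (∑ x ∈ S, w x = 1) →
      ∑ x ∈ S, w x * f x
        = ∑ s ∈ B, (θq s - θp s) * (∑ x ∈ S, zeta s x * w x)
          - (psi S B θq - psi S B θp) := by
    intro w hw
    have hx : ∀ x, w x * f x
        = (∑ s ∈ B, (θq s - θp s) * (zeta s x * w x))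
          - (psi S B θq - psi S B θp) * w x := by
      intro x
      simp only [hf]
      rw [mul_sub, Finset.mul_sum]
      congr 1
      · exact Finset.sum_congr rfl fun s _ => by ring
      · ring
    calc ∑ x ∈ S, w x * f x
        = ∑ x ∈ S, ((∑ s ∈ B, (θq s - θp s) * (zeta s x * w x))
            - (psi S B θq - psi S B θp) * w x) :=
          Finset.sum_congr rfl fun x _ => hx x
      _ = (∑ x ∈ S, ∑ s ∈ B, (θq s - θp s) * (zeta s x * w x))
            - (psi S B θq - psi S B θp) * ∑ x ∈ S, w x := by
          rw [Finset.sum_sub_distrib, Finset.mul_sum]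
      _ = ∑ s ∈ B, (θq s - θp s) * (∑ x ∈ S, zeta s x * w x)
            - (psi S B θq - psi S B θp) := by
          rw [Finset.sum_comm, hw, mul_one]
          congr 1
          exact Finset.sum_congr rfl fun s _ => by rw [Finset.mul_sum]
  have hrf : ∑ x ∈ S, r x * f x = ∑ x ∈ S, q x * f x := by
    rw [hsw r hsum, hsw q hq1]
    congr 1
    exact Finset.sum_congr rfl fun s hs => by rw [hmatch s hs]
  rw [h1, h2, hrf]
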